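/- arXiv:1309.3866 — 2 statements merged into one kernel-verified Lean document; each statement's English description precedes it below -/
import Mathlib

section
/- If a Banach space X contains a complemented subspace isometric to ℓ¹, then X admits an equivalent norm |·| such that every convex combination of slices of the unit ball of (X,|·|)* has diameter 2; equivalently, the bidual norm of (X,|·|) is octahedral. -/
/-!
Renorm by `|x| = ‖P x‖ + ‖x - P x‖`. For the unit vectors `e k` of the `ℓ¹` copy and the
coordinate functionals `φ k = δₖ ∘ T ∘ P`, every line `ℝ ∙ e k` is an L-summand of `|·|`, so
the value at `e k` of any functional in the dual ball can be reset to `1` or to `-1` without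
leaving the dual ball; the two resets differ by `2 φ k`, of dual norm `2`. The `φ k` satisfy
an upper `c₀`-estimate, hence are weakly null in `X*`, so for large `k` the resets move no
slice functional by much and the reset functionals stay in the given slices.
-/

open scoped BigOperators
open Metric

noncomputable section

/-- The convex combination `∑ lam i • S i` of sets. -/
def ccomb {E : Type*} [AddCommMonoid E] [Module ℝ E] {n : ℕ}
    (lam : Fin n → ℝ) (S : Fin n → Set E) : Set E :=
  {y | ∃ f : Fin n → E, (∀ i, f i ∈ S i) ∧ y = ∑ i, lam i • f i}

/-- The slice of a bounded set `A` cut by the functional `Φ` at depth `β` below its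
supremum on `A`. -/
def supSlice {E : Type*} [NormedAddCommGroup E] [NormedSpace ℝ E]
    (A : Set E) (Φ : StrongDual ℝ E) (β : ℝ) : Set E :=
  {x ∈ A | sSup ((fun y => Φ y) '' A) - β < Φ x}

/-- `B` is the closed unit ball of some norm on `X` equivalent to the given one. -/
def IsEquivBall {X : Type*} [NormedAddCommGroup X] [NormedSpace ℝ X] (B : Set X) : Prop :=
  IsClosed B ∧ Convex ℝ B ∧ B = -B ∧
    (∃ r > (0:ℝ), closedBall 0 r ⊆ B) ∧ (∃ R : ℝ, B ⊆ closedBall 0 R)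

/-- The dual unit ball of the norm with unit ball `B`: the polar of `B`. -/
def dualBall {X : Type*} [NormedAddCommGroup X] [NormedSpace ℝ X] (B : Set X) :
    Set (StrongDual ℝ X) :=
  {f | ∀ x ∈ B, f x ≤ 1}

/-- The dual norm, with respect to the norm with unit ball `B`, of a functional `h`. -/
def dualNormOf {X : Type*} [NormedAddCommGroup X] [NormedSpace ℝ X] (B : Set X)
    (h : StrongDual ℝ X) : ℝ :=
  sSup ((fun x => h x) '' B)

open Filter Topology

section DualBall

variable {X : Type*} [NormedAddCommGroup X] [NormedSpace ℝ X]

theorem isEquivBall_closedBall {p : Seminorm ℝ X} (hp : Continuous p) (hle : ∀ x, ‖x‖ ≤ p x) :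
    IsEquivBall (p.closedBall 0 1) := by
  obtain ⟨C, hC, hpC⟩ := Seminorm.bound_of_continuous_normedSpace p hp
  refine ⟨?_, p.convex_closedBall 0 1, by rw [Seminorm.neg_closedBall, neg_zero],
    ⟨C⁻¹, inv_pos.2 hC, fun x hx => ?_⟩, ⟨1, fun x hx => ?_⟩⟩
  · convert isClosed_le hp continuous_const using 1
    ext x
    exact Seminorm.mem_closedBall_zero p
  · rw [mem_closedBall_zero_iff] at hx
    rw [Seminorm.mem_closedBall_zero]
    calc p x ≤ C * ‖x‖ := hpC x
      _ ≤ C * C⁻¹ := by gcongr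
      _ = 1 := mul_inv_cancel₀ hC.ne'
  · rw [Seminorm.mem_closedBall_zero] at hx
    exact mem_closedBall_zero_iff.2 ((hle x).trans hx)

theorem convex_dualBall (B : Set X) : Convex ℝ (dualBall B) := by
  intro f hf g hg a b ha hb hab x hx
  change a * f x + b * g x ≤ 1
  nlinarith [hf x hx, hg x hx]

theorem zero_mem_dualBall (B : Set X) : (0 : StrongDual ℝ X) ∈ dualBall B :=
  fun _ _ => by simp

theorem dualNormOf_sub_le_two {B : Set X} (hB : B = -B) {f g : StrongDual ℝ X}
    (hf : f ∈ dualBall B) (hg : g ∈ dualBall B) : dualNormOf B (f - g) ≤ 2 := by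
  refine Real.sSup_le ?_ zero_le_two
  rintro _ ⟨x, hx, rfl⟩
  have hgx := hg (-x) (by rw [hB] at hx; exact hx)
  rw [map_neg] at hgx
  change f x - g x ≤ 2
  linarith [hf x hx]

theorem apply_le_of_mem_dualBall {p : Seminorm ℝ X} {f : StrongDual ℝ X}
    (hf : f ∈ dualBall (p.closedBall 0 1)) (x : X) : f x ≤ p x := by
  refine le_of_forall_pos_le_add fun ε hε => ?_
  have hpos : 0 < p x + ε := by positivity
  have hx := hf ((p x + ε)⁻¹ • x) (by
    rw [Seminorm.mem_closedBall_zero, map_smul_eq_mul, Real.norm_eq_abs, abs_inv,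
      abs_of_pos hpos, inv_mul_le_iff₀ hpos]
    linarith)
  rwa [map_smul, smul_eq_mul, inv_mul_le_iff₀ hpos, mul_one] at hx

theorem abs_apply_le_of_mem_dualBall {p : Seminorm ℝ X} {f : StrongDual ℝ X}
    (hf : f ∈ dualBall (p.closedBall 0 1)) (x : X) : |f x| ≤ p x := by
  have hneg := apply_le_of_mem_dualBall hf (-x)
  rw [map_neg, map_neg_eq_map] at hneg
  exact abs_le.2 ⟨by linarith, apply_le_of_mem_dualBall hf x⟩

end DualBall

theorem ccomb_subset {E : Type*} [AddCommGroup E] [Module ℝ E] {C : Set E} (hC : Convex ℝ C)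
    {n : ℕ} {lam : Fin n → ℝ} (hlam : ∀ i, 0 ≤ lam i) (hsum : ∑ i, lam i = 1)
    {S : Fin n → Set E} (hS : ∀ i, S i ⊆ C) : ccomb lam S ⊆ C := by
  rintro _ ⟨f, hf, rfl⟩
  exact hC.sum_mem (fun i _ => hlam i) hsum fun i _ => hS i (hf i)

section Slice

variable {E : Type*} [NormedAddCommGroup E] [NormedSpace ℝ E]

theorem supSlice_nonempty {A : Set E} (hA : A.Nonempty) (Φ : StrongDual ℝ E) {β : ℝ}
    (hβ : 0 < β) : (supSlice A Φ β).Nonempty := by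
  obtain ⟨_, ⟨f, hf, rfl⟩, hlt⟩ :=
    exists_lt_of_lt_csSup (hA.image fun y => Φ y) (sub_lt_self _ hβ)
  exact ⟨f, hf, hlt⟩

theorem mem_supSlice_of_le {A : Set E} {Φ : StrongDual ℝ E} {β₀ β : ℝ} {f g : E}
    (hf : f ∈ supSlice A Φ β₀) (hg : g ∈ A) (hβ : β₀ + (Φ f - Φ g) ≤ β) :
    g ∈ supSlice A Φ β :=
  ⟨hg, by linarith [hf.2]⟩

end Slice

section LSummandLine

variable {X : Type*} [NormedAddCommGroup X] [NormedSpace ℝ X]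

/-- `ℝ ∙ e` is an L-summand of `(X, p)`, with L-projection `x ↦ φ x • e`, and `p e ≤ 1`. -/
structure IsLSummandLine (p : Seminorm ℝ X) (e : X) (φ : StrongDual ℝ X) : Prop where
  le_one : p e ≤ 1
  apply_self : φ e = 1
  sub_add_abs_le : ∀ x, p (x - φ x • e) + |φ x| ≤ p x

variable {p : Seminorm ℝ X} {e : X} {φ : StrongDual ℝ X}

theorem IsLSummandLine.abs_apply_le (h : IsLSummandLine p e φ) (x : X) : |φ x| ≤ p x := by
  linarith [h.sub_add_abs_le x, apply_nonneg p (x - φ x • e)]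

theorem IsLSummandLine.dualNormOf_smul (h : IsLSummandLine p e φ) {c : ℝ} (hc : 0 ≤ c) :
    dualNormOf (p.closedBall 0 1) (c • φ) = c := by
  refine IsGreatest.csSup_eq ⟨⟨e, (p.mem_closedBall_zero).2 h.le_one, ?_⟩, ?_⟩
  · change c * φ e = c
    rw [h.apply_self, mul_one]
  · rintro _ ⟨x, hx, rfl⟩
    change c * φ x ≤ c
    rw [Seminorm.mem_closedBall_zero] at hx
    exact mul_le_of_le_one_right hc ((le_abs_self _).trans ((h.abs_apply_le x).trans hx))

/-- `f + (s - f e) • φ` is `f` with its value at `e` reset to `s`. -/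
theorem IsLSummandLine.add_smul_mem_dualBall (h : IsLSummandLine p e φ) {f : StrongDual ℝ X}
    (hf : f ∈ dualBall (p.closedBall 0 1)) {s : ℝ} (hs : |s| ≤ 1) :
    f + (s - f e) • φ ∈ dualBall (p.closedBall 0 1) := by
  intro x hx
  rw [Seminorm.mem_closedBall_zero] at hx
  have hval : (f + (s - f e) • φ) x = f (x - φ x • e) + s * φ x := by
    change f x + (s - f e) * φ x = _
    rw [map_sub, map_smul, smul_eq_mul]
    ring
  have hs' : s * φ x ≤ |φ x| :=
    (le_abs_self _).trans (by rw [abs_mul]; exact mul_le_of_le_one_left (abs_nonneg _) hs)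
  linarith [apply_le_of_mem_dualBall hf (x - φ x • e), h.sub_add_abs_le x]

theorem IsLSummandLine.exists_sub_eq_two_smul (h : IsLSummandLine p e φ)
    (Φ : StrongDual ℝ (StrongDual ℝ X)) {β : ℝ} (hβ : 0 < β) (hΦ : |Φ φ| < β / 4) :
    ∃ f ∈ supSlice (dualBall (p.closedBall 0 1)) Φ β,
      ∃ g ∈ supSlice (dualBall (p.closedBall 0 1)) Φ β, f - g = (2 : ℝ) • φ := by
  set D := dualBall (p.closedBall 0 1)
  obtain ⟨f₀, hf₀⟩ := supSlice_nonempty ⟨0, zero_mem_dualBall _⟩ Φ (half_pos hβ)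
  have hf₀e : |f₀ e| ≤ 1 := (abs_apply_le_of_mem_dualBall hf₀.1 e).trans h.le_one
  have hmem : ∀ s : ℝ, |s| = 1 → f₀ + (s - f₀ e) • φ ∈ supSlice D Φ β := by
    intro s hs
    -- `f₀` is `β / 2`-deep, and the reset moves `Φ` by at most `|s - f₀ e| |Φ φ| ≤ 2 (β / 4)`.
    refine mem_supSlice_of_le hf₀ (h.add_smul_mem_dualBall hf₀.1 hs.le) ?_
    have hcoef : |s - f₀ e| ≤ 2 := (abs_sub _ _).trans (by linarith)
    have hpert : -((s - f₀ e) * Φ φ) ≤ 2 * (β / 4) :=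
      (neg_le_abs _).trans (by rw [abs_mul]; exact mul_le_mul hcoef hΦ.le (abs_nonneg _) zero_le_two)
    rw [map_add, map_smul, smul_eq_mul]
    linarith
  refine ⟨_, hmem 1 abs_one, _, hmem (-1) (by simp), ?_⟩
  rw [add_sub_add_left_eq_sub]
  module

end LSummandLine

theorem sSup_dualNormOf_sub_ccomb_supSlice_eq_two {X : Type*} [NormedAddCommGroup X]
    [NormedSpace ℝ X] (p : Seminorm ℝ X) {e : ℕ → X} {φ : ℕ → StrongDual ℝ X}
    (hL : ∀ k, IsLSummandLine p (e k) (φ k))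
    (hnull : ∀ Φ : StrongDual ℝ (StrongDual ℝ X), Tendsto (fun k => Φ (φ k)) atTop (𝓝 0))
    {n : ℕ} {lam : Fin n → ℝ} (hlam : ∀ i, 0 ≤ lam i) (hsum : ∑ i, lam i = 1)
    (Φ : Fin n → StrongDual ℝ (StrongDual ℝ X)) {β : Fin n → ℝ} (hβ : ∀ i, 0 < β i) :
    sSup (Set.image2 (fun f g => dualNormOf (p.closedBall 0 1) (f - g))
      (ccomb lam fun i => supSlice (dualBall (p.closedBall 0 1)) (Φ i) (β i))
      (ccomb lam fun i => supSlice (dualBall (p.closedBall 0 1)) (Φ i) (β i))) = 2 := by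
  set D := dualBall (p.closedBall 0 1)
  set S := ccomb lam fun i => supSlice D (Φ i) (β i)
  have hsub : S ⊆ D := ccomb_subset (convex_dualBall _) hlam hsum fun i => Set.sep_subset _ _
  have hub : ∀ d ∈ Set.image2 (fun f g => dualNormOf (p.closedBall 0 1) (f - g)) S S, d ≤ 2 := by
    rintro _ ⟨f, hf, g, hg, rfl⟩
    exact dualNormOf_sub_le_two (by rw [Seminorm.neg_closedBall, neg_zero]) (hsub hf) (hsub hg)
  have hsmall : ∀ i, ∀ᶠ k in atTop, |Φ i (φ k)| < β i / 4 := fun i => by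
    simpa only [mem_ball, Real.dist_eq, sub_zero] using
      (hnull (Φ i)).eventually (ball_mem_nhds 0 (by linarith [hβ i] : 0 < β i / 4))
  obtain ⟨k, hk⟩ := (eventually_all.2 hsmall).exists
  choose f hf g hg hfg using fun i => (hL k).exists_sub_eq_two_smul (Φ i) (hβ i) (hk i)
  have hdiff : ∑ i, lam i • f i - ∑ i, lam i • g i = (2 : ℝ) • φ k := by
    rw [← Finset.sum_sub_distrib, ← one_smul ℝ ((2 : ℝ) • φ k), ← hsum, Finset.sum_smul]
    exact Finset.sum_congr rfl fun i _ => by rw [← hfg, smul_sub]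
  refine le_antisymm (Real.sSup_le hub zero_le_two) (le_csSup ⟨2, hub⟩ ?_)
  refine ⟨_, ⟨f, hf, rfl⟩, _, ⟨g, hg, rfl⟩, ?_⟩
  dsimp only
  rw [hdiff, (hL k).dualNormOf_smul zero_le_two]

theorem tendsto_apply_zero_of_norm_sum_smul_le {E : Type*} [NormedAddCommGroup E]
    [NormedSpace ℝ E] {ψ : ℕ → E} {C : ℝ}
    (hψ : ∀ (K : Finset ℕ) (c : ℕ → ℝ), (∀ k, |c k| ≤ 1) → ‖∑ k ∈ K, c k • ψ k‖ ≤ C)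
    (Φ : StrongDual ℝ E) : Tendsto (fun k => Φ (ψ k)) atTop (𝓝 0) := by
  refine Summable.tendsto_atTop_zero (Summable.of_abs ?_)
  refine summable_of_sum_range_le (c := ‖Φ‖ * C) (fun _ => abs_nonneg _) fun m => ?_
  calc ∑ k ∈ Finset.range m, |Φ (ψ k)|
      = Φ (∑ k ∈ Finset.range m, (SignType.sign (Φ (ψ k)) : ℝ) • ψ k) := by
        simp only [map_sum, map_smul, smul_eq_mul, sign_mul_self]
    _ ≤ ‖Φ‖ * ‖∑ k ∈ Finset.range m, (SignType.sign (Φ (ψ k)) : ℝ) • ψ k‖ :=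
        (le_abs_self _).trans (Φ.le_opNorm _)
    _ ≤ ‖Φ‖ * C := by
        gcongr
        exact hψ _ _ fun k => by rcases lt_trichotomy (Φ (ψ k)) 0 with h | h | h <;> simp [h]

local notation "ℓ¹" => lp (fun _ : ℕ => ℝ) 1

theorem isLSummandLine_lp_one_single (k : ℕ) :
    IsLSummandLine (normSeminorm ℝ ℓ¹) (lp.single 1 k 1) (lp.evalCLM ℝ (fun _ : ℕ => ℝ) 1 k) where
  le_one := by simp [lp.norm_single]
  apply_self := by simp [lp.evalCLM]
  sub_add_abs_le v := by
    have h := lp.norm_sub_norm_compl_sub_single (E := fun _ : ℕ => ℝ) (by norm_num) v {k}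
    simp only [Finset.sum_singleton, ENNReal.toReal_one, Real.rpow_one, Real.norm_eq_abs] at h
    change ‖v - v k • lp.single 1 k 1‖ + |v k| ≤ ‖v‖
    rw [← lp.single_smul, smul_eq_mul, mul_one]
    linarith

theorem norm_sum_smul_evalCLM_comp_le {X : Type*} [NormedAddCommGroup X] [NormedSpace ℝ X]
    (A : X →L[ℝ] ℓ¹) (K : Finset ℕ) (c : ℕ → ℝ) (hc : ∀ k, |c k| ≤ 1) :
    ‖∑ k ∈ K, c k • (lp.evalCLM ℝ (fun _ : ℕ => ℝ) 1 k).comp A‖ ≤ ‖A‖ := by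
  refine ContinuousLinearMap.opNorm_le_bound _ (norm_nonneg A) fun x => ?_
  have hsum := lp.sum_rpow_le_norm_rpow (E := fun _ : ℕ => ℝ) (by norm_num) (A x) K
  simp only [ENNReal.toReal_one, Real.rpow_one, Real.norm_eq_abs] at hsum
  calc ‖(∑ k ∈ K, c k • (lp.evalCLM ℝ (fun _ : ℕ => ℝ) 1 k).comp A) x‖
      = |∑ k ∈ K, c k * A x k| := by simp [lp.evalCLM]
    _ ≤ ∑ k ∈ K, |A x k| := (Finset.abs_sum_le_sum_abs _ _).trans (Finset.sum_le_sum fun k _ => by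
        rw [abs_mul]; exact mul_le_of_le_one_left (abs_nonneg _) (hc k))
    _ ≤ ‖A‖ * ‖x‖ := hsum.trans (A.le_opNorm x)

section ComplementNorm

variable {E X : Type*} [NormedAddCommGroup E] [NormedSpace ℝ E] [NormedAddCommGroup X]
  [NormedSpace ℝ X] (J : E →ₗᵢ[ℝ] X) (A : X →L[ℝ] E)

/-- The renorming `‖P x‖ + ‖x - P x‖` for the projection `P = J ∘ A` onto the copy `J E`. -/
def complementNorm : Seminorm ℝ X :=
  (normSeminorm ℝ E).comp A.toLinearMap +
    (normSeminorm ℝ X).comp (LinearMap.id - J.toLinearMap ∘ₗ A.toLinearMap)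

theorem complementNorm_apply (x : X) : complementNorm J A x = ‖A x‖ + ‖x - J (A x)‖ := rfl

theorem continuous_complementNorm : Continuous (complementNorm J A) := by
  simp only [funext (complementNorm_apply J A)]
  fun_prop

theorem norm_le_complementNorm (x : X) : ‖x‖ ≤ complementNorm J A x :=
  calc ‖x‖ = ‖J (A x) + (x - J (A x))‖ := by rw [add_sub_cancel]
    _ ≤ ‖J (A x)‖ + ‖x - J (A x)‖ := norm_add_le _ _
    _ = complementNorm J A x := by rw [J.norm_map, complementNorm_apply]

variable {J A}

theorem IsLSummandLine.complementNorm (hAJ : ∀ v, A (J v) = v) {u : E} {ψ : StrongDual ℝ E}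
    (h : IsLSummandLine (normSeminorm ℝ E) u ψ) :
    IsLSummandLine (complementNorm J A) (J u) (ψ.comp A) where
  le_one := by simpa [complementNorm_apply, hAJ] using h.le_one
  apply_self := by simpa [hAJ] using h.apply_self
  sub_add_abs_le x := by
    have hA : A (x - ψ (A x) • J u) = A x - ψ (A x) • u := by rw [map_sub, map_smul, hAJ]
    have hJ : x - ψ (A x) • J u - J (A x - ψ (A x) • u) = x - J (A x) := by
      rw [map_sub, map_smul]
      abel
    have := h.sub_add_abs_le (A x)
    simp only [coe_normSeminorm] at this
    simp only [complementNorm_apply, ContinuousLinearMap.comp_apply, hA, hJ]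
    linarith

end ComplementNorm

theorem complemented_l1_copy_renorming_ccomb_slices_dual_diam_two_general
    (X : Type*) [NormedAddCommGroup X] [NormedSpace ℝ X]
    (Y : Subspace ℝ X)
    (hiso : Nonempty (Y ≃ₗᵢ[ℝ] lp (fun _ : ℕ => ℝ) 1))
    (P : X →L[ℝ] X) (hproj : P ∘L P = P) (hrange : Set.range P = (Y : Set X)) :
    ∃ B : Set X, IsEquivBall B ∧
      ∀ (n : ℕ) (lam : Fin n → ℝ), (∀ i, 0 < lam i) → ∑ i, lam i = 1 →
      ∀ (Φ : Fin n → StrongDual ℝ (StrongDual ℝ X)) (β : Fin n → ℝ),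
        (∀ i, 0 < β i) →
        sSup (Set.image2 (fun f g => dualNormOf B (f - g))
          (ccomb lam (fun i => supSlice (dualBall B) (Φ i) (β i)))
          (ccomb lam (fun i => supSlice (dualBall B) (Φ i) (β i)))) = 2 := by
  obtain ⟨T⟩ := hiso
  have hPY : ∀ x, P x ∈ Y := fun x => by rw [← SetLike.mem_coe, ← hrange]; exact ⟨x, rfl⟩
  let A : X →L[ℝ] ℓ¹ := (T.toContinuousLinearEquiv : Y →L[ℝ] ℓ¹).comp (P.codRestrict Y hPY)
  let J : ℓ¹ →ₗᵢ[ℝ] X := Y.subtypeₗᵢ.comp T.symm.toLinearIsometry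
  have hAJ : ∀ v, A (J v) = v := fun v => by
    obtain ⟨x, hx⟩ : J v ∈ Set.range P := hrange ▸ (T.symm v).2
    have hPJ : P (J v) = J v := by rw [← hx, ← ContinuousLinearMap.comp_apply, hproj]
    change T ⟨P (J v), _⟩ = v
    simp_rw [hPJ]
    exact T.apply_symm_apply v
  refine ⟨(complementNorm J A).closedBall 0 1,
    isEquivBall_closedBall (continuous_complementNorm J A) (norm_le_complementNorm J A),
    fun n lam hlam hsum Φ β hβ => ?_⟩
  exact sSup_dualNormOf_sub_ccomb_supSlice_eq_two _
    (fun k => (isLSummandLine_lp_one_single k).complementNorm hAJ)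
    (tendsto_apply_zero_of_norm_sum_smul_le (norm_sum_smul_evalCLM_comp_le A))
    (fun i => (hlam i).le) hsum Φ hβ

theorem complemented_l1_copy_renorming_ccomb_slices_dual_diam_two
    (X : Type*) [NormedAddCommGroup X] [NormedSpace ℝ X] [CompleteSpace X]
    (Y : Subspace ℝ X)
    (hiso : Nonempty (Y ≃ₗᵢ[ℝ] lp (fun _ : ℕ => ℝ) 1))
    (P : X →L[ℝ] X) (hproj : P ∘L P = P) (hrange : Set.range P = (Y : Set X)) :
    ∃ B : Set X, IsEquivBall B ∧
      ∀ (n : ℕ) (lam : Fin n → ℝ), (∀ i, 0 < lam i) → ∑ i, lam i = 1 →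
      ∀ (Φ : Fin n → StrongDual ℝ (StrongDual ℝ X)) (β : Fin n → ℝ),
        (∀ i, 0 < β i) →
        sSup (Set.image2 (fun f g => dualNormOf B (f - g))
          (ccomb lam (fun i => supSlice (dualBall B) (Φ i) (β i)))
          (ccomb lam (fun i => supSlice (dualBall B) (Φ i) (β i)))) = 2 :=
  complemented_l1_copy_renorming_ccomb_slices_dual_diam_two_general X Y hiso P hproj hrange
end
end

section
/- Let X be a Banach space with octahedral norm. Then for any x₁,…,x_N ∈ S_X, ρ ∈ (0,1), weights α_i > 0 with Σα_i = 1, and any δ > 0, there exist functionals f_i, g_i ∈ S(B_{X*}, x_i, ρ) such that ‖Σ α_i f_i − Σ α_i g_i‖ > 2 − δ. -/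
open scoped BigOperators
open Metric

noncomputable section

/-- The norm of `X` is octahedral. -/
def IsOctahedral (X : Type*) [NormedAddCommGroup X] [NormedSpace ℝ X] : Prop :=
  ∀ ε : ℝ, 0 < ε → ∀ Y : Subspace ℝ X, FiniteDimensional ℝ Y →
    ∃ x : X, ‖x‖ = 1 ∧ ∀ y ∈ Y, ∀ l : ℝ, (1 - ε) * (‖y‖ + |l|) ≤ ‖y + l • x‖

/-- The weak-star slice of the dual unit ball determined by `x` and `ρ`. -/
def wSlice {X : Type*} [NormedAddCommGroup X] [NormedSpace ℝ X] (x : X) (ρ : ℝ) :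
    Set (StrongDual ℝ X) :=
  {f | ‖f‖ ≤ 1 ∧ 1 - ρ < f x}

/-! Octahedrality gives a unit vector `u` with `‖xᵢ ± u‖` almost `2` for every `i`. A functional
of norm at most `1` norming `xᵢ + u` is then almost `1` at both `xᵢ` and `u`, and one norming
`xᵢ - u` is almost `1` at `xᵢ` and almost `-1` at `u`. Both lie in the slice at `xᵢ`, and any
convex combination of their differences is almost `2` at the unit vector `u`. -/

section

variable {X : Type*} [NormedAddCommGroup X] [NormedSpace ℝ X]

theorem IsOctahedral.exists_norm_add_smul_ge (hoct : IsOctahedral X) {ι : Type*} [Finite ι]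
    (x : ι → X) {ε : ℝ} (hε : 0 < ε) :
    ∃ u : X, ‖u‖ = 1 ∧ ∀ i (l : ℝ), (1 - ε) * (‖x i‖ + |l|) ≤ ‖x i + l • u‖ := by
  obtain ⟨u, hu, hfar⟩ := hoct ε hε (Submodule.span ℝ (Set.range x))
    (FiniteDimensional.span_of_finite ℝ (Set.finite_range x))
  exact ⟨u, hu, fun i => hfar (x i) (Submodule.subset_span (Set.mem_range_self i))⟩

theorem StrongDual.apply_le_one {f : StrongDual ℝ X} (hf : ‖f‖ ≤ 1) {z : X} (hz : ‖z‖ ≤ 1) :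
    f z ≤ 1 :=
  calc f z ≤ ‖f z‖ := le_abs_self _
    _ ≤ ‖f‖ * ‖z‖ := f.le_opNorm z
    _ ≤ 1 := mul_le_one₀ hf (norm_nonneg _) hz

theorem exists_dual_one_sub_le_apply_of_two_sub_le_norm_add {y u : X} (hy : ‖y‖ ≤ 1)
    (hu : ‖u‖ ≤ 1) {η : ℝ} (h : 2 - η ≤ ‖y + u‖) :
    ∃ f : StrongDual ℝ X, ‖f‖ ≤ 1 ∧ 1 - η ≤ f y ∧ 1 - η ≤ f u := by
  obtain ⟨f, hf, hfyu⟩ := exists_dual_vector'' ℝ (y + u)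
  have hsplit : f y + f u = ‖y + u‖ := by rw [← map_add]; exact_mod_cast hfyu
  have hfy := StrongDual.apply_le_one hf hy
  have hfu := StrongDual.apply_le_one hf hu
  exact ⟨f, hf, by linarith, by linarith⟩

theorem le_norm_of_le_apply {F : StrongDual ℝ X} {u : X} (hu : ‖u‖ = 1) {c : ℝ}
    (h : c ≤ F u) : c ≤ ‖F‖ :=
  calc c ≤ F u := h
    _ ≤ ‖F u‖ := le_abs_self _
    _ ≤ ‖F‖ * ‖u‖ := F.le_opNorm u
    _ = ‖F‖ := by rw [hu, mul_one]

theorem le_sum_mul_of_le {ι : Type*} [Fintype ι] {α a : ι → ℝ} (hα : ∀ i, 0 ≤ α i)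
    (hsum : ∑ i, α i = 1) {c : ℝ} (h : ∀ i, c ≤ a i) : c ≤ ∑ i, α i * a i :=
  calc c = ∑ i, α i * c := by rw [← Finset.sum_mul, hsum, one_mul]
    _ ≤ ∑ i, α i * a i :=
      Finset.sum_le_sum fun i _ => mul_le_mul_of_nonneg_left (h i) (hα i)

end

theorem octahedral_gives_far_apart_ccomb_functionals_general
    (X : Type*) [NormedAddCommGroup X] [NormedSpace ℝ X]
    (hoct : IsOctahedral X)
    (N : ℕ) (x : Fin N → X) (hx : ∀ i, ‖x i‖ = 1)
    (ρ : ℝ) (hρ : ρ ∈ Set.Ioo (0:ℝ) 1)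
    (α : Fin N → ℝ) (hα : ∀ i, 0 < α i) (hsum : ∑ i, α i = 1)
    (δ : ℝ) (hδ : 0 < δ) :
    ∃ f g : Fin N → StrongDual ℝ X,
      (∀ i, f i ∈ wSlice (x i) ρ) ∧ (∀ i, g i ∈ wSlice (x i) ρ) ∧
      2 - δ < ‖(∑ i, α i • f i) - ∑ i, α i • g i‖ := by
  obtain ⟨η, hη, hηρ, hηδ⟩ : ∃ η : ℝ, 0 < η ∧ η < ρ ∧ 2 * η < δ :=
    ⟨min ρ δ / 4, by have := hρ.1; positivity, by linarith [min_le_left ρ δ, hρ.1],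
      by linarith [min_le_right ρ δ]⟩
  obtain ⟨u, hu, hfar⟩ := hoct.exists_norm_add_smul_ge x (half_pos hη)
  have hfar_add : ∀ i, 2 - η ≤ ‖x i + u‖ := fun i => by
    have := hfar i 1
    rw [hx i, abs_one, one_smul] at this
    linarith
  have hfar_sub : ∀ i, 2 - η ≤ ‖x i + -u‖ := fun i => by
    have := hfar i (-1)
    rw [hx i, abs_neg, abs_one, neg_one_smul] at this
    linarith
  choose f hf using fun i =>
    exists_dual_one_sub_le_apply_of_two_sub_le_norm_add (hx i).le hu.le (hfar_add i)
  choose g hg using fun i =>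
    exists_dual_one_sub_le_apply_of_two_sub_le_norm_add (hx i).le (norm_neg u ▸ hu).le
      (hfar_sub i)
  refine ⟨f, g, fun i => ⟨(hf i).1, by linarith [(hf i).2.1]⟩,
    fun i => ⟨(hg i).1, by linarith [(hg i).2.1]⟩, ?_⟩
  have hgap : ∀ i, 2 - 2 * η ≤ f i u - g i u := fun i => by
    linarith [(hf i).2.2, (hg i).2.2, map_neg (g i) u]
  refine lt_of_lt_of_le (by linarith : 2 - δ < 2 - 2 * η) (le_norm_of_le_apply hu ?_)
  simpa [Finset.sum_apply', mul_sub, Finset.sum_sub_distrib] using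
    le_sum_mul_of_le (fun i => (hα i).le) hsum hgap

theorem octahedral_gives_far_apart_ccomb_functionals
    (X : Type*) [NormedAddCommGroup X] [NormedSpace ℝ X] [CompleteSpace X]
    (hoct : IsOctahedral X)
    (N : ℕ) (x : Fin N → X) (hx : ∀ i, ‖x i‖ = 1)
    (ρ : ℝ) (hρ : ρ ∈ Set.Ioo (0:ℝ) 1)
    (α : Fin N → ℝ) (hα : ∀ i, 0 < α i) (hsum : ∑ i, α i = 1)
    (δ : ℝ) (hδ : 0 < δ) :
    ∃ f g : Fin N → StrongDual ℝ X,
      (∀ i, f i ∈ wSlice (x i) ρ) ∧ (∀ i, g i ∈ wSlice (x i) ρ) ∧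
      2 - δ < ‖(∑ i, α i • f i) - ∑ i, α i • g i‖ :=
  octahedral_gives_far_apart_ccomb_functionals_general X hoct N x hx ρ hρ α hα hsum δ hδ
end
end
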